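/- arXiv:1901.04577 — 11 statements merged into one kernel-verified Lean document; each statement's English description precedes it below -/
import Mathlib

section
/- Let R be a valuation domain and S ⊆ Spec(R) a non-empty set of prime ideals with no maximal element with respect to inclusion. Then the union ⋃S is an idempotent prime ideal of R. -/
/-!
The union of a directed family of prime ideals is a prime ideal. The idempotence rests on one
observation about rings whose ideals are totally ordered: if `p < q` with `p` prime, then
`p ≤ q * p`. Indeed, pick `y ∈ q \ p`; for `x ∈ p`, `x ∣ y` would put `y` in `p`, so `y ∣ x`,
say `x = y * z`, and primality of `p` forces `z ∈ p`. Since no member of the family is largest,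
every member lies in the square of the union.
-/

namespace Ideal

variable {R : Type*} [CommSemiring R]

theorem coe_sSup_of_directedOn {S : Set (Ideal R)} (hne : S.Nonempty)
    (hdir : DirectedOn (· ≤ ·) S) : ((sSup S : Ideal R) : Set R) = ⋃ p ∈ S, (p : Set R) := by
  ext x
  simp [Submodule.mem_sSup_of_directed hne hdir]

theorem isPrime_sSup_of_directedOn {S : Set (Ideal R)} (hne : S.Nonempty)
    (hdir : DirectedOn (· ≤ ·) S) (hprime : ∀ p ∈ S, p.IsPrime) : (sSup S).IsPrime := by
  have hmem {x : R} : x ∈ sSup S ↔ ∃ p ∈ S, x ∈ p := Submodule.mem_sSup_of_directed hne hdir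
  refine ⟨fun htop => ?_, fun {x y} hxy => ?_⟩
  · obtain ⟨p, hp, hp1⟩ := hmem.mp (htop ▸ Submodule.mem_top : (1 : R) ∈ sSup S)
    exact (hprime p hp).ne_top ((eq_top_iff_one p).mpr hp1)
  · obtain ⟨p, hp, hxyp⟩ := hmem.mp hxy
    exact ((hprime p hp).mem_or_mem hxyp).imp (le_sSup hp ·) (le_sSup hp ·)

theorem le_mul_of_isPrime_of_lt (hchain : ∀ I J : Ideal R, I ≤ J ∨ J ≤ I) {p q : Ideal R}
    (hp : p.IsPrime) (hpq : p < q) : p ≤ q * p := by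
  obtain ⟨y, hyq, hyp⟩ := Set.exists_of_ssubset hpq
  intro x hxp
  rcases hchain (span {x}) (span {y}) with hyx | hxy
  · obtain ⟨z, rfl⟩ := span_singleton_le_span_singleton.mp hyx
    exact mul_mem_mul hyq ((hp.mem_or_mem hxp).resolve_left hyp)
  · obtain ⟨z, rfl⟩ := span_singleton_le_span_singleton.mp hxy
    exact absurd (p.mul_mem_right z hxp) hyp

theorem sSup_mul_self_of_forall_exists_gt (hchain : ∀ I J : Ideal R, I ≤ J ∨ J ≤ I)
    {S : Set (Ideal R)} (hprime : ∀ p ∈ S, p.IsPrime) (hnomax : ∀ p ∈ S, ∃ q ∈ S, p < q) :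
    sSup S * sSup S = sSup S := by
  refine le_antisymm mul_le_right (sSup_le fun p hp => ?_)
  obtain ⟨q, hq, hpq⟩ := hnomax p hp
  calc p ≤ q * p := le_mul_of_isPrime_of_lt hchain (hprime p hp) hpq
    _ ≤ sSup S * sSup S := mul_mono (le_sSup hq) (le_sSup hp)

end Ideal

theorem union_of_primes_no_max_is_idempotent_prime_general
    {R : Type*} [CommRing R]
    (hchain : ∀ I J : Ideal R, I ≤ J ∨ J ≤ I)
    (S : Set (Ideal R)) (hprime : ∀ p ∈ S, p.IsPrime) (hne : S.Nonempty)
    (hnomax : ∀ p ∈ S, ∃ q ∈ S, p < q) :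
    ∃ P : Ideal R, ((P : Set R) = ⋃ p ∈ S, (p : Set R)) ∧ P.IsPrime ∧ P * P = P := by
  have hdir : DirectedOn (· ≤ ·) S := IsChain.directedOn fun p _ q _ _ => hchain p q
  exact ⟨sSup S, Ideal.coe_sSup_of_directedOn hne hdir,
    Ideal.isPrime_sSup_of_directedOn hne hdir hprime,
    Ideal.sSup_mul_self_of_forall_exists_gt hchain hprime hnomax⟩

/-- Over a valuation domain, the union of a non-empty set of prime ideals with no
maximal element (with respect to inclusion) is an idempotent prime ideal. -/
theorem union_of_primes_no_max_is_idempotent_prime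
    {R : Type*} [CommRing R] [IsDomain R]
    (hchain : ∀ I J : Ideal R, I ≤ J ∨ J ≤ I)
    (S : Set (Ideal R)) (hprime : ∀ p ∈ S, p.IsPrime) (hne : S.Nonempty)
    (hnomax : ∀ p ∈ S, ∃ q ∈ S, p < q) :
    ∃ P : Ideal R, ((P : Set R) = ⋃ p ∈ S, (p : Set R)) ∧ P.IsPrime ∧ P * P = P :=
  union_of_primes_no_max_is_idempotent_prime_general hchain S hprime hne hnomax
end

section
/- Let R be a valuation domain and p a prime ideal of R. Then either p is idempotent (p² = p), or the extension p·R_p of p in the localization R_p is a principal ideal of R_p. -/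
/-!
If `p ≠ p²`, pick `x ∈ p \ p²`. For `y ∈ p` the principal ideals `(x)` and `(y)` are comparable:
either `x ∣ y`, or `x = r y`, and then `r ∉ p` since `x ∉ p²`, so `r` becomes a unit in `R_p`.
Either way `y ∈ x R_p`, hence `p R_p = x R_p`.
-/

theorem Ideal.map_algebraMap_eq_span_singleton_of_forall_dvd_mul {R S : Type*} [CommRing R]
    [CommRing S] [Algebra R S] (M : Submonoid R) [IsLocalization M S] {I : Ideal R} {x : R}
    (hx : x ∈ I) (h : ∀ y ∈ I, ∃ m ∈ M, x ∣ m * y) :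
    I.map (algebraMap R S) = Ideal.span {algebraMap R S x} := by
  refine le_antisymm (Ideal.map_le_iff_le_comap.mpr fun y hy => ?_)
    (Ideal.span_singleton_le_iff_mem _ |>.mpr (Ideal.mem_map_of_mem _ hx))
  obtain ⟨m, hm, c, hc⟩ := h y hy
  have hunit : IsUnit (algebraMap R S m) := IsLocalization.map_units S ⟨m, hm⟩
  have hy' : algebraMap R S y = ↑hunit.unit⁻¹ * algebraMap R S c * algebraMap R S x := by
    rw [mul_assoc, ← map_mul, mul_comm c, ← hc, map_mul, ← mul_assoc, IsUnit.val_inv_mul, one_mul]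
  rw [Ideal.mem_comap, hy']
  exact Ideal.mul_mem_left _ _ (Ideal.mem_span_singleton_self _)

theorem Ideal.exists_mem_primeCompl_dvd_mul_of_notMem_mul_self {R : Type*} [CommRing R]
    (hdvd : ∀ a b : R, a ∣ b ∨ b ∣ a) {p : Ideal R} [p.IsPrime] {x y : R} (hx : x ∉ p * p)
    (hy : y ∈ p) : ∃ m ∈ p.primeCompl, x ∣ m * y := by
  rcases hdvd x y with hxy | ⟨r, rfl⟩
  · exact ⟨1, p.primeCompl.one_mem, by rwa [one_mul]⟩
  · exact ⟨r, fun hr => hx (Ideal.mul_mem_mul hy hr), by rw [mul_comm]⟩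

theorem prime_idempotent_or_principal_in_localization_general
    {R : Type*} [CommRing R]
    (hchain : ∀ I J : Ideal R, I ≤ J ∨ J ≤ I)
    (p : Ideal R) (hp : p.IsPrime) :
    p * p = p ∨
      (p.map (algebraMap R (Localization.AtPrime p))).IsPrincipal := by
  refine or_iff_not_imp_left.mpr fun hsq => ?_
  obtain ⟨x, hxp, hxsq⟩ := SetLike.exists_of_lt (lt_of_le_of_ne Ideal.mul_le_left hsq)
  have hdvd : ∀ a b : R, a ∣ b ∨ b ∣ a := fun a b => by
    simpa only [Ideal.span_singleton_le_span_singleton, or_comm] using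
      hchain (Ideal.span {a}) (Ideal.span {b})
  exact ⟨⟨_, Ideal.map_algebraMap_eq_span_singleton_of_forall_dvd_mul p.primeCompl hxp
    fun _ hy => Ideal.exists_mem_primeCompl_dvd_mul_of_notMem_mul_self hdvd hxsq hy⟩⟩

/-- Over a valuation domain, any prime ideal `p` is either idempotent or its extension
to the localization `R_p` is a principal ideal. -/
theorem prime_idempotent_or_principal_in_localization
    {R : Type*} [CommRing R] [IsDomain R]
    (hchain : ∀ I J : Ideal R, I ≤ J ∨ J ≤ I)
    (p : Ideal R) (hp : p.IsPrime) :
    p * p = p ∨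
      (p.map (algebraMap R (Localization.AtPrime p))).IsPrincipal :=
  prime_idempotent_or_principal_in_localization_general hchain p hp
end

section
/- Let R be a valuation domain, I a proper ideal of R, and q a prime ideal of R. Then the following are equivalent: (i) I^# ⊆ q; (ii) I is a module over the localization R_q, i.e., sI = I for all s ∈ R \ q; (iii) R/I is q-torsion-free, i.e., for every r ∈ R with rs ∈ I for some s ∈ R \ q, one has r ∈ I. -/
/-!
(i) ⇔ (ii) is contraposition. For `s ≠ 0`, cancellation turns `sI = I` into `q`-torsion-freeness
at `s`. Conversely, in a valuation ring every `x ∈ I` either is a multiple `s * t`, and then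
`t ∈ I` by torsion-freeness, or divides `s`, which would put `s`, hence `1`, into `I`.
-/

namespace Ideal

variable {R : Type*} [CommRing R]

theorem mem_of_mul_mem_of_span_singleton_mul_eq [IsDomain R] {I : Ideal R} {r s : R}
    (hs : s ≠ 0) (h : span {s} * I = I) (hrs : r * s ∈ I) : r ∈ I := by
  rw [← h, mem_span_singleton_mul] at hrs
  obtain ⟨y, hy, hyr⟩ := hrs
  rwa [mul_left_cancel₀ hs (hyr.trans (mul_comm r s))] at hy

theorem span_singleton_mul_eq_of_mul_mem_imp_mem [PreValuationRing R] {I : Ideal R}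
    (hI : I ≠ ⊤) {s : R} (h : ∀ r, r * s ∈ I → r ∈ I) : span {s} * I = I := by
  refine le_antisymm mul_le_right fun x hx => ?_
  rcases ValuationRing.dvd_total s x with ⟨t, rfl⟩ | ⟨t, rfl⟩
  · exact mem_span_singleton_mul.mpr ⟨t, h t (by rwa [mul_comm]), rfl⟩
  · refine absurd ((eq_top_iff_one I).mpr (h 1 ?_)) hI
    rw [one_mul]
    exact I.mul_mem_right t hx

theorem span_singleton_mul_eq_iff_mul_mem_imp_mem [IsDomain R] [PreValuationRing R]
    {I : Ideal R} (hI : I ≠ ⊤) {s : R} (hs : s ≠ 0) :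
    span {s} * I = I ↔ ∀ r, r * s ∈ I → r ∈ I :=
  ⟨fun h _ => mem_of_mul_mem_of_span_singleton_mul_eq hs h,
    span_singleton_mul_eq_of_mul_mem_imp_mem hI⟩

end Ideal

theorem attached_prime_le_iff_localized_iff_torsionFree_general
    {R : Type*} [CommRing R] [IsDomain R]
    (hchain : ∀ I J : Ideal R, I ≤ J ∨ J ≤ I)
    (I : Ideal R) (hI : I ≠ ⊤) (q : Ideal R) :
    ((∀ r : R, Ideal.span {r} * I ≠ I → r ∈ q) ↔
      (∀ s : R, s ∉ q → Ideal.span {s} * I = I)) ∧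
    ((∀ s : R, s ∉ q → Ideal.span {s} * I = I) ↔
      (∀ r s : R, s ∉ q → r * s ∈ I → r ∈ I)) := by
  have : PreValuationRing R := PreValuationRing.iff_ideal_total.mpr ⟨hchain⟩
  have key (s : R) (hs : s ∉ q) := Ideal.span_singleton_mul_eq_iff_mul_mem_imp_mem hI
    (ne_of_mem_of_not_mem q.zero_mem hs).symm
  exact ⟨forall_congr' fun _ => not_imp_comm,
    fun h r s hs => (key s hs).mp (h s hs) r, fun h s hs => (key s hs).mpr fun r => h r s hs⟩

/-- Over a valuation domain, for a proper ideal `I` and a prime ideal `q`, the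
conditions (i) `I^# ⊆ q`, (ii) `sI = I` for all `s ∉ q` (i.e. `I` is an
`R_q`-module), and (iii) `R/I` is `q`-torsion-free, are all equivalent. -/
theorem attached_prime_le_iff_localized_iff_torsionFree
    {R : Type*} [CommRing R] [IsDomain R]
    (hchain : ∀ I J : Ideal R, I ≤ J ∨ J ≤ I)
    (I : Ideal R) (hI : I ≠ ⊤) (q : Ideal R) (hq : q.IsPrime) :
    ((∀ r : R, Ideal.span {r} * I ≠ I → r ∈ q) ↔
      (∀ s : R, s ∉ q → Ideal.span {s} * I = I)) ∧
    ((∀ s : R, s ∉ q → Ideal.span {s} * I = I) ↔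
      (∀ r s : R, s ∉ q → r * s ∈ I → r ∈ I)) :=
  attached_prime_le_iff_localized_iff_torsionFree_general hchain I hI q
end

section
/- Let R be a valuation domain, p an idempotent prime ideal of R, and N an R-module. Then p ⊗_R N = 0 if and only if pN = 0. -/
/-!
The multiplication map `p ⊗ N → N` has image `pN`, which gives one direction. Conversely, if
`pN = 0` then every `b * c` with `b, c ∈ p` satisfies `(b * c) ⊗ n = b ⊗ c • n = 0`; since `p = p²`
these products generate `p`, so all pure tensors, and hence `p ⊗ N`, vanish.
-/

open TensorProduct

namespace Ideal

variable {R N : Type*} [CommSemiring R] [AddCommMonoid N] [Module R N]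

theorem smul_top_eq_bot_of_subsingleton_tensorProduct (I : Ideal R) [Subsingleton (I ⊗[R] N)] :
    I • (⊤ : Submodule R N) = ⊥ := by
  rw [← Submodule.map_range_rTensor_subtype_lid, Subsingleton.elim (LinearMap.rTensor N I.subtype) 0,
    LinearMap.range_zero, Submodule.map_bot]

theorem tmul_eq_zero_of_mul_self_eq_of_smul_top_eq_bot {I : Ideal R} (hI : I * I = I)
    (h : I • (⊤ : Submodule R N) = ⊥) (a : I) (n : N) : a ⊗ₜ[R] n = 0 := by
  have hprod : I ≤ (LinearMap.ker (TensorProduct.mk R I N)).map I.subtype := by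
    refine hI.ge.trans <| Submodule.mul_le.mpr fun b hb c hc =>
      ⟨c • ⟨b, hb⟩, LinearMap.ext fun n => ?_, by simp [mul_comm]⟩
    have hcn : c • n = 0 := by
      simpa [h] using Submodule.smul_mem_smul hc (Submodule.mem_top (x := n))
    rw [mk_apply, smul_tmul, hcn, tmul_zero, LinearMap.zero_apply]
  obtain ⟨a', ha', ha⟩ := hprod a.2
  rw [← Subtype.ext ha]
  exact LinearMap.congr_fun ha' n

theorem subsingleton_tensorProduct_of_mul_self_eq {I : Ideal R} (hI : I * I = I)
    (h : I • (⊤ : Submodule R N) = ⊥) : Subsingleton (I ⊗[R] N) :=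
  subsingleton_of_forall_eq 0 fun t => t.induction_on rfl
    (tmul_eq_zero_of_mul_self_eq_of_smul_top_eq_bot hI h)
    fun _ _ hx hy => by rw [hx, hy, add_zero]

end Ideal

theorem idempotent_prime_tensor_eq_zero_iff_smul_eq_zero_general
    {R : Type*} [CommRing R]
    (p : Ideal R) (hidem : p * p = p)
    (N : Type*) [AddCommGroup N] [Module R N] :
    Subsingleton (TensorProduct R ↥p N) ↔ p • (⊤ : Submodule R N) = ⊥ :=
  ⟨fun _ => p.smul_top_eq_bot_of_subsingleton_tensorProduct,
    Ideal.subsingleton_tensorProduct_of_mul_self_eq hidem⟩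

/-- Over a valuation domain, for an idempotent prime ideal `p` and any module `N`,
`p ⊗[R] N = 0` if and only if `pN = 0`. -/
theorem idempotent_prime_tensor_eq_zero_iff_smul_eq_zero
    {R : Type*} [CommRing R] [IsDomain R]
    (hchain : ∀ I J : Ideal R, I ≤ J ∨ J ≤ I)
    (p : Ideal R) (hp : p.IsPrime) (hidem : p * p = p)
    (N : Type*) [AddCommGroup N] [Module R N] :
    Subsingleton (TensorProduct R ↥p N) ↔ p • (⊤ : Submodule R N) = ⊥ :=
  idempotent_prime_tensor_eq_zero_iff_smul_eq_zero_general p hidem N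
end

section
/- Let R be a valuation domain with prime ideals q ⊊ p where p is idempotent, and let M be an R-module. Then Tor_1^R(R_q/p, M) = 0 if and only if p·Γ_q(M) = 0, where Γ_q(M) is the q-torsion submodule of M (the kernel of the localization map M → M_q). -/
/-!
Tensoring `0 → p R_q → R_q → R_q/p → 0` with `M` and using flatness of `R_q` identifies
`Tor₁(R_q/p, M)` with the kernel of `p ⊗ M → R_q ⊗ M ≅ M_q`, `a ⊗ m ↦ am/1` (as `R` is a
domain, `p R_q` is isomorphic to `p`). Over a valuation ring every element of `p ⊗ M` is a pure
tensor `a ⊗ m`, and it lies in that kernel iff `am ∈ Γ_q(M)`. If `p Γ_q(M) = 0`, such a tensor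
vanishes: choosing `t ∈ p \ q` and comparing `a` with `t` gives `a = bc` with `b ∈ p` and
`cm ∈ Γ_q(M)`, and idempotency gives `b = b₁b₂` with `bᵢ ∈ p`, so `a ⊗ m = b₁ ⊗ b₂cm = 0`.
Conversely, for `a ∈ p` and `m ∈ Γ_q(M)` the tensor `a ⊗ m` is in the kernel, hence zero, and
its image `am` under the multiplication map `p ⊗ M → M` vanishes.
-/

open CategoryTheory TensorProduct LinearMap

universe u

section TensorLemmas

variable {R : Type*} [CommRing R] {X Y Z Q : Type*} [AddCommGroup X] [Module R X]
  [AddCommGroup Y] [Module R Y] [AddCommGroup Z] [Module R Z] [AddCommGroup Q] [Module R Q]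

theorem LinearMap.rTensor_lTensor_comm_apply (g : X →ₗ[R] Y) (f : Z →ₗ[R] Q) (x : X ⊗[R] Z) :
    g.rTensor Q (f.lTensor X x) = f.lTensor Y (g.rTensor Z x) := by
  rw [← comp_apply, ← comp_apply, rTensor_comp_lTensor, lTensor_comp_rTensor]

theorem LinearMap.lTensor_apply_apply_eq_zero {f : X →ₗ[R] Y} {g : Y →ₗ[R] Z} (h : g ∘ₗ f = 0)
    (x : Q ⊗[R] X) : g.lTensor Q (f.lTensor Q x) = 0 := by
  rw [← lTensor_comp_apply, h, lTensor_zero, LinearMap.zero_apply]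

theorem LinearMap.rTensor_apply_apply_eq_zero {f : X →ₗ[R] Y} {g : Y →ₗ[R] Z} (h : g ∘ₗ f = 0)
    (x : X ⊗[R] Q) : g.rTensor Q (f.rTensor Q x) = 0 := by
  rw [← rTensor_comp_apply, h, rTensor_zero, LinearMap.zero_apply]

end TensorLemmas

section FlatPresentation

variable {R : Type*} [CommRing R]
  {K F N : Type*} [AddCommGroup K] [Module R K] [AddCommGroup F] [Module R F]
  [AddCommGroup N] [Module R N] {ι : K →ₗ[R] F} {ρ : F →ₗ[R] N}
  {P₂ P₁ P₀ M : Type*} [AddCommGroup P₂] [Module R P₂] [AddCommGroup P₁] [Module R P₁]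
  [AddCommGroup P₀] [Module R P₀] [AddCommGroup M] [Module R M]
  {d₂ : P₂ →ₗ[R] P₁} {d₁ : P₁ →ₗ[R] P₀} {π : P₀ →ₗ[R] M}

theorem injective_rTensor_of_exact_lTensor [Module.Flat R P₀] (hι : Function.Injective ι)
    (hιρ : Function.Exact ι ρ) (hρ : Function.Surjective ρ) (hd : Function.Exact d₂ d₁)
    (hd₁ : Function.Exact d₁ π) (hπ : Function.Surjective π)
    (h : Function.Exact (d₂.lTensor N) (d₁.lTensor N)) :
    Function.Injective (ι.rTensor M) := by
  refine (injective_iff_map_eq_zero _).2 fun w hw => ?_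
  obtain ⟨w₀, rfl⟩ := lTensor_surjective K hπ w
  obtain ⟨u, hu⟩ := (lTensor_exact F hd₁ hπ (ι.rTensor P₀ w₀)).1 <| by
    rwa [← rTensor_lTensor_comm_apply]
  obtain ⟨z₂, hz₂⟩ := (h (ρ.rTensor P₁ u)).1 <| by
    rw [← rTensor_lTensor_comm_apply, hu,
      rTensor_apply_apply_eq_zero hιρ.linearMap_comp_eq_zero]
  obtain ⟨y, rfl⟩ := rTensor_surjective P₂ hρ z₂
  obtain ⟨v, hv⟩ := (rTensor_exact P₁ hιρ hρ (u - d₂.lTensor F y)).1 <| by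
    rw [map_sub, rTensor_lTensor_comm_apply, hz₂, sub_self]
  have hv₀ : d₁.lTensor K v = w₀ := Module.Flat.rTensor_preserves_injective_linearMap ι hι <| by
    rw [rTensor_lTensor_comm_apply, hv, map_sub, hu,
      lTensor_apply_apply_eq_zero hd.linearMap_comp_eq_zero, sub_zero]
  rw [← hv₀, lTensor_apply_apply_eq_zero hd₁.linearMap_comp_eq_zero]

theorem exact_lTensor_of_injective_rTensor [Module.Flat R F]
    (hιρ : Function.Exact ι ρ) (hρ : Function.Surjective ρ) (hd : Function.Exact d₂ d₁)
    (hd₁ : Function.Exact d₁ π) (hπ : Function.Surjective π)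
    (h : Function.Injective (ι.rTensor M)) :
    Function.Exact (d₂.lTensor N) (d₁.lTensor N) := by
  refine exact_of_comp_of_mem_range ?_ fun z hz => ?_
  · rw [← lTensor_comp, hd.linearMap_comp_eq_zero, lTensor_zero]
  obtain ⟨u, rfl⟩ := rTensor_surjective P₁ hρ z
  obtain ⟨t, ht⟩ := (rTensor_exact P₀ hιρ hρ (d₁.lTensor F u)).1 <| by
    rwa [rTensor_lTensor_comm_apply]
  obtain ⟨v, hv⟩ := (lTensor_exact K hd₁ hπ t).1 <| h <| by
    rw [rTensor_lTensor_comm_apply, ht, lTensor_apply_apply_eq_zero hd₁.linearMap_comp_eq_zero,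
      map_zero]
  obtain ⟨y, hy⟩ := (Module.Flat.lTensor_exact F hd (u - ι.rTensor P₁ v)).1 <| by
    rw [map_sub, ← rTensor_lTensor_comm_apply, hv, ht, sub_self]
  refine ⟨ρ.rTensor P₂ y, ?_⟩
  rw [← rTensor_lTensor_comm_apply, hy, map_sub,
    rTensor_apply_apply_eq_zero hιρ.linearMap_comp_eq_zero, sub_zero]

theorem exact_lTensor_iff_injective_rTensor [Module.Flat R F] [Module.Flat R P₀]
    (hι : Function.Injective ι) (hιρ : Function.Exact ι ρ) (hρ : Function.Surjective ρ)
    (hd : Function.Exact d₂ d₁) (hd₁ : Function.Exact d₁ π) (hπ : Function.Surjective π) :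
    Function.Exact (d₂.lTensor N) (d₁.lTensor N) ↔ Function.Injective (ι.rTensor M) :=
  ⟨injective_rTensor_of_exact_lTensor hι hιρ hρ hd hd₁ hπ,
    exact_lTensor_of_injective_rTensor hιρ hρ hd hd₁ hπ⟩

end FlatPresentation

namespace CategoryTheory.ProjectiveResolution

variable {R : Type u} [CommRing R] {M : ModuleCat.{u} R} (P : ProjectiveResolution M)

theorem exact_d_hom_d_hom : Function.Exact (P.complex.d 2 1).hom (P.complex.d 1 0).hom :=
  (ShortComplex.ShortExact.moduleCat_exact_iff_function_exact _).1 (P.exact_succ 0)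

theorem exact_d_hom_π_hom : Function.Exact (P.complex.d 1 0).hom (P.π.f 0).hom :=
  (ShortComplex.ShortExact.moduleCat_exact_iff_function_exact _).1 P.exact₀

theorem surjective_π_hom : Function.Surjective (P.π.f 0).hom :=
  (ModuleCat.epi_iff_surjective _).1 inferInstance

instance flat_X (n : ℕ) : Module.Flat R (P.complex.X n) := by
  have := (IsProjective.iff_projective (R := R) (P := P.complex.X n)).2 (P.projective n)
  infer_instance

theorem isZero_tor_one_iff_exact (N : ModuleCat.{u} R) :
    Limits.IsZero (((Tor (ModuleCat R) 1).obj N).obj M) ↔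
      Function.Exact ((P.complex.d 2 1).hom.lTensor N) ((P.complex.d 1 0).hom.lTensor N) := by
  refine (P.isoLeftDerivedObj ((MonoidalCategory.tensoringLeft _).obj N) 1).isZero_iff.trans ?_
  rw [HomologicalComplex.homologyFunctor_obj, ← HomologicalComplex.exactAt_iff_isZero_homology,
    HomologicalComplex.exactAt_iff' _ 2 1 0 (by simp) (by simp),
    ShortComplex.ShortExact.moduleCat_exact_iff_function_exact]
  rfl

end CategoryTheory.ProjectiveResolution

theorem isZero_tor_one_iff_injective_rTensor {R : Type u} [CommRing R]
    {K F N : Type u} [AddCommGroup K] [Module R K] [AddCommGroup F] [Module R F] [Module.Flat R F]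
    [AddCommGroup N] [Module R N] {ι : K →ₗ[R] F} {ρ : F →ₗ[R] N}
    (hι : Function.Injective ι) (hιρ : Function.Exact ι ρ) (hρ : Function.Surjective ρ)
    (M : ModuleCat.{u} R) :
    Limits.IsZero (((Tor (ModuleCat R) 1).obj (ModuleCat.of R N)).obj M) ↔
      Function.Injective (ι.rTensor M) := by
  obtain ⟨P⟩ := HasProjectiveResolution.out (Z := M)
  rw [P.isZero_tor_one_iff_exact]
  exact exact_lTensor_iff_injective_rTensor hι hιρ hρ P.exact_d_hom_d_hom P.exact_d_hom_π_hom
    P.surjective_π_hom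

section PreValuationRing

variable {R : Type*} [CommRing R] [PreValuationRing R]

theorem Ideal.exists_eq_mul_of_mul_self_eq {p : Ideal R} (hp : p * p = p) {a : R} (ha : a ∈ p) :
    ∃ b ∈ p, ∃ c ∈ p, a = b * c := by
  rw [← hp] at ha
  refine Submodule.mul_induction_on ha (fun b hb c hc => ⟨b, hb, c, hc, rfl⟩) ?_
  rintro _ _ ⟨b₁, hb₁, c₁, hc₁, rfl⟩ ⟨b₂, hb₂, c₂, hc₂, rfl⟩
  rcases ValuationRing.dvd_total b₁ b₂ with ⟨d, rfl⟩ | ⟨d, rfl⟩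
  · exact ⟨b₁, hb₁, c₁ + d * c₂, p.add_mem hc₁ (p.mul_mem_left d hc₂), by ring⟩
  · exact ⟨b₂, hb₂, c₂ + d * c₁, p.add_mem hc₂ (p.mul_mem_left d hc₁), by ring⟩

variable {M M' : Type*} [AddCommGroup M] [Module R M] [AddCommGroup M'] [Module R M']

theorem Ideal.exists_eq_tmul (I : Ideal R) (z : I ⊗[R] M) : ∃ (a : I) (m : M), z = a ⊗ₜ m := by
  induction z with
  | zero => exact ⟨0, 0, (tmul_zero _ _).symm⟩
  | tmul a m => exact ⟨a, m, rfl⟩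
  | add z₁ z₂ ih₁ ih₂ =>
    obtain ⟨a, m₁, rfl⟩ := ih₁
    obtain ⟨b, m₂, rfl⟩ := ih₂
    rcases ValuationRing.dvd_total (a : R) b with ⟨c, hc⟩ | ⟨c, hc⟩
    · refine ⟨a, m₁ + c • m₂, ?_⟩
      rw [show b = c • a from Subtype.ext (by simp [hc, mul_comm]), smul_tmul, tmul_add]
    · refine ⟨b, c • m₁ + m₂, ?_⟩
      rw [show a = c • b from Subtype.ext (by simp [hc, mul_comm]), smul_tmul, tmul_add]

theorem Ideal.tmul_eq_zero_of_smul_mem {q p : Ideal R} (hqp : q < p) (hp : p * p = p)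
    {N : Submodule R M} (hN : ∀ t ∉ q, ∀ x : M, t • x ∈ N → x ∈ N) (hpN : p • N = ⊥)
    (a : p) {m : M} (ham : (a : R) • m ∈ N) : a ⊗ₜ[R] m = 0 := by
  obtain ⟨t, htp, htq⟩ := SetLike.exists_of_lt hqp
  obtain ⟨b, hb, c, hbc, hcm⟩ : ∃ b ∈ p, ∃ c : R, (a : R) = b * c ∧ c • m ∈ N := by
    rcases ValuationRing.dvd_total t a with ⟨c, hc⟩ | ⟨d, hd⟩
    · exact ⟨t, htp, c, hc, hN t htq _ (by rwa [smul_smul, ← hc])⟩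
    · have haq : (a : R) ∉ q := fun h => htq (hd ▸ q.mul_mem_right d h)
      exact ⟨a, a.2, 1, (mul_one _).symm, by rw [one_smul]; exact hN _ haq m ham⟩
  obtain ⟨b₁, hb₁, b₂, hb₂, rfl⟩ := exists_eq_mul_of_mul_self_eq hp hb
  have hb₂cm : b₂ • c • m = 0 := by
    simpa [hpN] using Submodule.smul_mem_smul hb₂ hcm
  rw [show a = (b₂ * c) • ⟨b₁, hb₁⟩ from
      Subtype.ext (by simp only [hbc, SetLike.mk_smul_mk, smul_eq_mul]; ring),
    smul_tmul, mul_smul, hb₂cm, tmul_zero]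

theorem Ideal.injective_comp_lid_rTensor_subtype_iff {q p : Ideal R} (hqp : q < p)
    (hp : p * p = p) (f : M →ₗ[R] M') (hf : ∀ t ∉ q, ∀ x : M, t • x ∈ ker f → x ∈ ker f) :
    Function.Injective (f ∘ₗ TensorProduct.lid R M ∘ₗ p.subtype.rTensor M) ↔ p • ker f = ⊥ := by
  have happly (a : p) (m : M) :
      (f ∘ₗ TensorProduct.lid R M ∘ₗ p.subtype.rTensor M) (a ⊗ₜ m) = f ((a : R) • m) := by
    simp
  constructor
  · intro hinj
    rw [eq_bot_iff, Submodule.smul_le]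
    intro a ha m hm
    have hzero : (⟨a, ha⟩ : p) ⊗ₜ[R] m = 0 :=
      hinj (by rw [happly, map_zero, map_smul, mem_ker.1 hm, smul_zero])
    simpa using congrArg (fun z => TensorProduct.lid R M (p.subtype.rTensor M z)) hzero
  · intro hpN
    refine (injective_iff_map_eq_zero _).2 fun z hz => ?_
    obtain ⟨a, m, rfl⟩ := p.exists_eq_tmul z
    exact tmul_eq_zero_of_smul_mem hqp hp hf hpN a (by rwa [happly] at hz)

end PreValuationRing

section Localization

variable {R : Type*} [CommRing R] {M M' : Type*} [AddCommGroup M] [Module R M]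
  [AddCommGroup M'] [Module R M']

theorem IsLocalizedModule.mem_ker_of_smul_mem (S : Submonoid R) (f : M →ₗ[R] M')
    [IsLocalizedModule S f] {s : R} (hs : s ∈ S) {x : M} (hx : s • x ∈ ker f) : x ∈ ker f := by
  rw [mem_ker_iff S] at hx ⊢
  obtain ⟨r, hr, hrx⟩ := hx
  exact ⟨r * s, S.mul_mem hr hs, by rwa [mul_smul]⟩

theorem injective_rTensor_subtype_map_iff {S : Submonoid R} (hS : S ≤ nonZeroDivisors R)
    (I : Ideal R) :
    Function.Injective ((Submodule.map (Algebra.linearMap R (Localization S)) I).subtype.rTensor M) ↔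
      Function.Injective
        (LocalizedModule.mkLinearMap S M ∘ₗ TensorProduct.lid R M ∘ₗ I.subtype.rTensor M) := by
  have hinj : Function.Injective (Algebra.linearMap R (Localization S)) :=
    IsLocalization.injective _ hS
  let e := Submodule.equivMapOfInjective _ hinj I
  let b := (IsLocalizedModule.isBaseChange S (Localization S)
    (LocalizedModule.mkLinearMap S M)).equiv.restrictScalars R
  have key : b.toLinearMap ∘ₗ
      (Submodule.map (Algebra.linearMap R (Localization S)) I).subtype.rTensor M ∘ₗ
        e.rTensor M =
      LocalizedModule.mkLinearMap S M ∘ₗ TensorProduct.lid R M ∘ₗ I.subtype.rTensor M := by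
    ext a m
    simp [e, b, IsBaseChange.equiv_tmul]
  rw [← key, coe_comp, coe_comp, LinearEquiv.coe_coe, LinearEquiv.coe_coe,
    EquivLike.comp_injective, EquivLike.injective_comp]

end Localization

theorem tor_one_vanishes_iff_smul_torsion_eq_bot_general
    {R : Type} [CommRing R] [IsDomain R]
    (hchain : ∀ I J : Ideal R, I ≤ J ∨ J ≤ I)
    (q p : Ideal R) (hq : q.IsPrime) (hqp : q < p)
    (hidem : p * p = p)
    (M : Type) [AddCommGroup M] [Module R M] :
    Limits.IsZero
      (((Tor (ModuleCat R) 1).obj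
          (ModuleCat.of R ((Localization.AtPrime q) ⧸
            Submodule.map (Algebra.linearMap R (Localization.AtPrime q)) p))).obj
        (ModuleCat.of R M)) ↔
      p • LinearMap.ker (LocalizedModule.mkLinearMap q.primeCompl M) = ⊥ := by
  have : PreValuationRing R := PreValuationRing.iff_ideal_total.mpr ⟨hchain⟩
  set pA := Submodule.map (Algebra.linearMap R (Localization.AtPrime q)) p
  rw [isZero_tor_one_iff_injective_rTensor pA.injective_subtype (exact_subtype_mkQ pA)
    pA.mkQ_surjective, injective_rTensor_subtype_map_iff q.primeCompl_le_nonZeroDivisors p]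
  exact Ideal.injective_comp_lid_rTensor_subtype_iff hqp hidem _ fun t ht _ =>
    IsLocalizedModule.mem_ker_of_smul_mem q.primeCompl _ ht

/-- Over a valuation domain with primes `q ⊊ p`, `p` idempotent:
`Tor₁ᴿ(R_q/p, M) = 0` iff `p · Γ_q(M) = 0`, where `Γ_q(M)` is the kernel of the
localization map `M → M_q` and `R_q/p` is the quotient of the localization `R_q`
by the (image of the) ideal `p`. -/
theorem tor_one_vanishes_iff_smul_torsion_eq_bot
    {R : Type} [CommRing R] [IsDomain R]
    (hchain : ∀ I J : Ideal R, I ≤ J ∨ J ≤ I)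
    (q p : Ideal R) (hq : q.IsPrime) (hp : p.IsPrime) (hqp : q < p)
    (hidem : p * p = p)
    (M : Type) [AddCommGroup M] [Module R M] :
    Limits.IsZero
      (((Tor (ModuleCat R) 1).obj
          (ModuleCat.of R ((Localization.AtPrime q) ⧸
            Submodule.map (Algebra.linearMap R (Localization.AtPrime q)) p))).obj
        (ModuleCat.of R M)) ↔
      p • LinearMap.ker (LocalizedModule.mkLinearMap q.primeCompl M) = ⊥ :=
  tor_one_vanishes_iff_smul_torsion_eq_bot_general hchain q p hq hqp hidem M
end

section
/- Let R be a valuation domain with quotient field Q, and let p ⊆ p' ⊊ p'' be prime ideals of R. Then the module R_p/R_{p'} (the quotient of the localization R_p by the localization R_{p'}, both viewed as R-submodules of Q) is isomorphic to a direct limit of copies of R_p/p''. -/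
/-!
Put `S = R ∖ p'`. Every element of `R_p / R_{p'}` has the form `x / s` with `x ∈ R_p`, `s ∈ S`, so
`R_p / R_{p'}` is the direct limit of copies of `R_p / p''` indexed by `S`, the copy at `s` mapping
in by `x ↦ x / s` and the transition maps being multiplications by elements of `S`. The only thing
to check is that an `x` killed by `x ↦ x / s` dies in some later copy: if `x / s = b / u` with
`u ∈ S`, then for any `d ∈ p'' ∖ p'` the element `u d ∈ S` satisfies `u d x = d s b ∈ p''`.
-/

/-- Data exhibiting a module `T` as a direct limit of copies of a module `C`:
a directed system of copies of `C` together with a colimit cocone into `T`. -/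
structure DirectLimitPresentation (R : Type) [CommRing R]
    (C : Type) [AddCommGroup C] [Module R C]
    (T : Type) [AddCommGroup T] [Module R T] where
  ι : Type
  [pre : Preorder ι]
  directed : IsDirected ι (· ≤ ·)
  nonempty : Nonempty ι
  f : ∀ i j : ι, i ≤ j → C →ₗ[R] C
  map_self : ∀ (i : ι) (h : i ≤ i) (x : C), f i i h x = x
  map_map : ∀ (i j k : ι) (hij : i ≤ j) (hjk : j ≤ k) (x : C),
    f j k hjk (f i j hij x) = f i k (hij.trans hjk) x
  g : ι → (C →ₗ[R] T)
  compat : ∀ (i j : ι) (h : i ≤ j), (g j).comp (f i j h) = g i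
  jointly_surjective : ∀ t : T, ∃ (i : ι) (x : C), g i x = t
  eq_zero : ∀ (i : ι) (x : C), g i x = 0 → ∃ (j : ι) (h : i ≤ j), f i j h x = 0

section MulInvAlgebraMap

variable {R A : Type} [CommRing R] [CommRing A] [Algebra R A] {S : Submonoid R}
  (hS : ∀ s : S, IsUnit (algebraMap R A s))

noncomputable def mulInvAlgebraMap (s : S) : A →ₗ[R] A :=
  LinearMap.mulLeft R ↑(hS s).unit⁻¹

theorem mulInvAlgebraMap_eq_iff {s : S} {a b : A} :
    mulInvAlgebraMap hS s a = b ↔ a = (s : R) • b := by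
  rw [Algebra.smul_def, mulInvAlgebraMap, LinearMap.mulLeft_apply, Units.inv_mul_eq_iff_eq_mul,
    IsUnit.unit_spec]

theorem smul_mulInvAlgebraMap (s : S) (a : A) : (s : R) • mulInvAlgebraMap hS s a = a :=
  ((mulInvAlgebraMap_eq_iff hS).mp rfl).symm

theorem mulInvAlgebraMap_one (a : A) : mulInvAlgebraMap hS 1 a = a :=
  (mulInvAlgebraMap_eq_iff hS).mpr (one_smul R a).symm

theorem mulInvAlgebraMap_mul_smul (s t : S) (a : A) :
    mulInvAlgebraMap hS (s * t) ((t : R) • a) = mulInvAlgebraMap hS s a := by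
  rw [mulInvAlgebraMap_eq_iff, Submonoid.coe_mul, mul_comm, mul_smul, smul_mulInvAlgebraMap]

end MulInvAlgebraMap

namespace DirectLimitPresentation

open Classical in
/-- The copies are indexed by finite multisets of elements of `S`, the copy at `i` mapping in by
division by `i.prod`: unlike divisibility in `S`, inclusion of multisets determines the
transition multiplier `(j - i).prod` without any cancellation law in `R`. -/
noncomputable def ofSubmonoid {R A : Type} [CommRing R] [CommRing A] [Algebra R A]
    {S : Submonoid R} (hS : ∀ s : S, IsUnit (algebraMap R A s)) (P N : Submodule R A)
    (hPN : ∀ (s : S), ∀ a ∈ P, mulInvAlgebraMap hS s a ∈ N)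
    (hNP : N ≤ (Submodule.torsion' R (A ⧸ P) S).comap P.mkQ) :
    DirectLimitPresentation R (A ⧸ P) (A ⧸ N) :=
  { ι := Multiset S
    directed := ⟨fun i j => ⟨i + j, Multiset.le_add_right i j, Multiset.le_add_left j i⟩⟩
    nonempty := ⟨0⟩
    f := fun i j _ => ((j - i).prod : R) • LinearMap.id
    map_self := fun i _ x => by simp
    map_map := fun i j k hij hjk x => by
      simp only [LinearMap.smul_apply, LinearMap.id_apply, smul_smul, ← Submonoid.coe_mul,
        ← Multiset.prod_add, tsub_add_tsub_cancel hjk hij]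
    g := fun i => P.liftQ (N.mkQ ∘ₗ mulInvAlgebraMap hS i.prod) fun a ha => by
      simpa using hPN i.prod a ha
    compat := fun i j hij => by
      refine Submodule.linearMap_qext _ (LinearMap.ext fun a => ?_)
      have hj : j.prod = i.prod * (j - i).prod := by
        rw [← Multiset.prod_add, add_tsub_cancel_of_le hij]
      simp only [LinearMap.comp_apply, LinearMap.smul_apply, LinearMap.id_apply,
        Submodule.mkQ_apply, ← Submodule.Quotient.mk_smul, Submodule.liftQ_apply, hj,
        mulInvAlgebraMap_mul_smul]
    jointly_surjective := fun t => by
      obtain ⟨a, rfl⟩ := N.mkQ_surjective t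
      exact ⟨0, P.mkQ a, by simp [mulInvAlgebraMap_one]⟩
    eq_zero := fun i x hx => by
      obtain ⟨a, rfl⟩ := P.mkQ_surjective x
      obtain ⟨t, ht⟩ := (Submodule.mem_torsion'_iff (R := R) (S := S) _).mp
        (hNP ((Submodule.Quotient.mk_eq_zero N).mp hx))
      refine ⟨{t} + i, Multiset.le_add_left i {t}, ?_⟩
      rw [Submonoid.smul_def] at ht
      rw [add_tsub_cancel_right, Multiset.prod_singleton, LinearMap.smul_apply,
        LinearMap.id_apply, ← smul_mulInvAlgebraMap hS i.prod a, map_smul, smul_comm, ht,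
        smul_zero] }

end DirectLimitPresentation

theorem IsLocalization.smul_map_id_mk' {R S Q : Type} [CommRing R] [CommRing S] [Algebra R S]
    [CommRing Q] [Algebra R Q] {M T : Submonoid R} [IsLocalization M S] [IsLocalization T Q]
    (hy : M ≤ T.comap (RingHom.id R)) (b : R) (u : M) :
    (u : R) • map Q (RingHom.id R) hy (mk' S b u) = algebraMap R Q b := by
  rw [map_mk']
  exact smul_mk'_self (S := Q) (m := (⟨u, hy u.2⟩ : T))

/-- Over a valuation domain with primes `p ⊆ p' ⊊ p''`, the module `R_p/R_{p'}` is
isomorphic to a direct limit of copies of `R_p/p''`. -/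
theorem quotient_of_localizations_is_directLimit_of_copies
    {R : Type} [CommRing R]
    (p p' p'' : Ideal R) (hp : p.IsPrime) (hp' : p'.IsPrime)
    (h1 : p ≤ p') (h2 : p' < p'') :
    Nonempty (DirectLimitPresentation R
      ((Localization.AtPrime p) ⧸
        Submodule.map (Algebra.linearMap R (Localization.AtPrime p)) p'')
      ((Localization.AtPrime p) ⧸
        Submodule.span R (Set.range
          (IsLocalization.map (M := p'.primeCompl) (T := p.primeCompl)
            (S := Localization.AtPrime p')
            (Localization.AtPrime p) (RingHom.id R)
            (by intro x hx; simp only [Submonoid.mem_comap, RingHom.id_apply]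
                exact fun hmem => hx (h1 hmem)))))) := by
  have hS (s : p'.primeCompl) : IsUnit (algebraMap R (Localization.AtPrime p) s) :=
    IsLocalization.map_units _ (⟨s, fun hs => s.2 (h1 hs)⟩ : p.primeCompl)
  refine ⟨.ofSubmonoid hS _ _ ?_ ?_⟩
  · rintro s _ ⟨b, -, rfl⟩
    refine Submodule.subset_span ⟨IsLocalization.mk' _ b s, ?_⟩
    rw [eq_comm, mulInvAlgebraMap_eq_iff]
    exact (IsLocalization.smul_map_id_mk' _ b s).symm
  · obtain ⟨d, hd'', hd'⟩ := SetLike.exists_of_lt h2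
    have hd : d ∈ p'.primeCompl := hd'
    rw [Submodule.span_le]
    rintro _ ⟨z, rfl⟩
    obtain ⟨⟨b, u⟩, rfl⟩ := IsLocalization.mk'_surjective p'.primeCompl z
    refine (Submodule.mem_torsion'_iff (R := R) (S := p'.primeCompl) _).mpr ⟨⟨d, hd⟩ * u, ?_⟩
    rw [Submonoid.smul_def, Submonoid.coe_mul, mul_smul, ← map_smul, ← map_smul,
      IsLocalization.smul_map_id_mk', Submodule.mkQ_apply, Submodule.Quotient.mk_eq_zero]
    exact ⟨d * b, p''.mul_mem_right b hd'', by
      rw [Algebra.linearMap_apply, map_mul, Algebra.smul_def]⟩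
end

section
/- Let R be a valuation domain and q a prime ideal. Let M be an R-module and J an ideal of R with q ⊊ J. Then the torsion-free quotient F_q(M) = im(M → M ⊗_R R_q) is q-divisible (i.e., an R_q-module) if and only if (R_q/J) ⊗_R M = 0. -/
/-!
Both conditions say that `f : M → M_q` is surjective. Divisibility of its image by every
`s ∉ q` is surjectivity because `s` acts bijectively on `M_q`. On the other side,
`R_q ⊗ M ≅ M_q`, so by right exactness `(R_q/J) ⊗ M` vanishes iff `M_q` is spanned by the
elements `j • f m` with `j ∈ J`. These always lie in the image of `f`, and conversely an element
`t ∈ J \ q` is a unit on `M_q`, so a surjective `f` gives every `y ∈ M_q` as `t • f m`.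
-/

open TensorProduct LinearMap

theorem TensorProduct.subsingleton_quotient_tensor_iff {R P M : Type*} [CommRing R]
    [AddCommGroup P] [Module R P] [AddCommGroup M] [Module R M] (N : Submodule R P) :
    Subsingleton ((P ⧸ N) ⊗[R] M) ↔ range (N.subtype.rTensor M) = ⊤ := by
  rw [← rTensor_mkQ, ker_eq_top]
  constructor
  · intro _
    exact LinearMap.ext fun _ => Subsingleton.elim _ _
  · intro h
    refine ⟨fun x y => ?_⟩
    obtain ⟨x, rfl⟩ := rTensor_surjective M N.mkQ_surjective x
    obtain ⟨y, rfl⟩ := rTensor_surjective M N.mkQ_surjective y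
    simp [h]

namespace IsLocalizedModule

variable {R : Type*} [CommRing R] {S : Submonoid R} {M M' : Type*} [AddCommGroup M] [Module R M]
  [AddCommGroup M'] [Module R M'] (f : M →ₗ[R] M') [IsLocalizedModule S f]

include f in
theorem smul_surjective (s : S) : Function.Surjective fun m : M' => s • m :=
  ((Module.End.isUnit_iff _).mp (map_units f s)).surjective

theorem range_divisible_iff_surjective :
    (∀ s ∈ S, ∀ y ∈ range f, ∃ z ∈ range f, s • z = y) ↔ Function.Surjective f := by
  constructor
  · intro hdiv y
    obtain ⟨⟨m, s⟩, hy⟩ := surj S f y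
    obtain ⟨z, hz, hzy⟩ := hdiv s s.2 (f m) ⟨m, rfl⟩
    rw [← hy] at hzy
    exact smul_injective f s hzy ▸ hz
  · intro hf s hs y _
    obtain ⟨z, hz⟩ := smul_surjective f ⟨s, hs⟩ y
    exact ⟨z, hf z, hz⟩

variable {A : Type*} [CommRing A] [Algebra R A] [IsLocalization S A] [Module A M']
  [IsScalarTower R A M']

theorem isBaseChange_equiv_rTensor_mem_range (J : Ideal R)
    (x : Submodule.map (Algebra.linearMap R A) J ⊗[R] M) :
    (isBaseChange S A f).equiv
      ((Submodule.map (Algebra.linearMap R A) J).subtype.rTensor M x) ∈ range f := by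
  induction x using TensorProduct.induction_on with
  | zero => simp
  | add x y hx hy => simpa only [map_add] using add_mem hx hy
  | tmul a m =>
    obtain ⟨_, ⟨j, hj, rfl⟩⟩ := a
    refine ⟨j • m, ?_⟩
    simp [IsBaseChange.equiv_tmul, algebraMap_smul]

theorem range_rTensor_map_eq_top_iff {J : Ideal R} {t : R} (htJ : t ∈ J) (htS : t ∈ S) :
    range ((Submodule.map (Algebra.linearMap R A) J).subtype.rTensor M) = ⊤ ↔
      Function.Surjective f := by
  constructor
  · intro h y
    obtain ⟨x, hx⟩ := Submodule.eq_top_iff'.mp h ((isBaseChange S A f).equiv.symm y)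
    simpa [hx] using isBaseChange_equiv_rTensor_mem_range (S := S) f J x
  · intro hf
    set e := (isBaseChange S A f).equiv
    refine eq_top_iff.mpr fun x _ => ?_
    -- `t` is invertible on `M'`, so every `x` is `t ⊗ m` for some `m`.
    obtain ⟨y, hy⟩ := smul_surjective f ⟨t, htS⟩ (e x)
    obtain ⟨m, rfl⟩ := hf y
    refine ⟨⟨algebraMap R A t, t, htJ, rfl⟩ ⊗ₜ m, e.injective ?_⟩
    simp [e, IsBaseChange.equiv_tmul, algebraMap_smul, ← hy]

end IsLocalizedModule

theorem torsionFreeQuotient_divisible_iff_tensor_vanishes_general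
    {R : Type} [CommRing R]
    (q : Ideal R) (hq : q.IsPrime) (J : Ideal R) (hqJ : q < J)
    (M : Type) [AddCommGroup M] [Module R M] :
    (∀ s : R, s ∉ q →
      ∀ y ∈ LinearMap.range (LocalizedModule.mkLinearMap q.primeCompl M),
        ∃ z ∈ LinearMap.range (LocalizedModule.mkLinearMap q.primeCompl M), s • z = y) ↔
    Subsingleton (TensorProduct R
      ((Localization.AtPrime q) ⧸
        Submodule.map (Algebra.linearMap R (Localization.AtPrime q)) J) M) := by
  obtain ⟨t, htJ, htq⟩ := SetLike.exists_of_lt hqJ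
  let f := LocalizedModule.mkLinearMap q.primeCompl M
  rw [TensorProduct.subsingleton_quotient_tensor_iff,
    IsLocalizedModule.range_rTensor_map_eq_top_iff f htJ (S := q.primeCompl) htq]
  exact IsLocalizedModule.range_divisible_iff_surjective (S := q.primeCompl) f

/-- Over a valuation domain, for a prime `q`, an ideal `J` with `q ⊊ J`, and a module `M`:
the torsion-free quotient `F_q(M) = im(M → M_q)` is `q`-divisible (i.e. an `R_q`-module)
if and only if `(R_q/J) ⊗_R M = 0`. -/
theorem torsionFreeQuotient_divisible_iff_tensor_vanishes
    {R : Type} [CommRing R] [IsDomain R]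
    (hchain : ∀ I J : Ideal R, I ≤ J ∨ J ≤ I)
    (q : Ideal R) (hq : q.IsPrime) (J : Ideal R) (hqJ : q < J)
    (M : Type) [AddCommGroup M] [Module R M] :
    (∀ s : R, s ∉ q →
      ∀ y ∈ LinearMap.range (LocalizedModule.mkLinearMap q.primeCompl M),
        ∃ z ∈ LinearMap.range (LocalizedModule.mkLinearMap q.primeCompl M), s • z = y) ↔
    Subsingleton (TensorProduct R
      ((Localization.AtPrime q) ⧸
        Submodule.map (Algebra.linearMap R (Localization.AtPrime q)) J) M) :=
  torsionFreeQuotient_divisible_iff_tensor_vanishes_general q hq J hqJ M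
end

section
/- Let R be a maximal valuation domain with maximal ideal m and quotient field Q. Then Q/m is an injective cogenerator of the category of R-modules. -/
/-!
Baer's criterion: a map `f : I → Q/J` extends to `R` once the cosets
`S r = {q | r • q ≡ f r}` (`r ∈ I` nonzero) have a common point. As divisibility is total,
`S a ⊆ S b` whenever `a ∣ b`, so the family is directed downwards and has the finite
intersection property; for `r` dividing a fixed `r₀ ∈ I` the `S r` are cosets of submodules of
`R ∙ r₀⁻¹ ≅ R`, and linear compactness of `R` yields a common point.
For cogeneration, a nonzero `x ∈ M` spans `R ⧸ ann x`, and `ann x ⊆ m` since `R` is local,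
so `r • x ↦ r • 1` is a nonzero map `R ∙ x → Q/m`, which extends to `M` by injectivity.
-/

universe u v

def IsLinearlyCompact (R : Type u) (M : Type v) [Ring R] [AddCommGroup M] [Module R M] : Prop :=
  ∀ (ι : Type u) (a : ι → M) (N : ι → Submodule R M),
    (∀ s : Finset ι, ∃ x, ∀ i ∈ s, x - a i ∈ N i) → ∃ x, ∀ i, x - a i ∈ N i

namespace IsLinearlyCompact

variable {R : Type u} {M M' : Type*} [Ring R] [AddCommGroup M] [Module R M] [AddCommGroup M']
  [Module R M']

theorem of_linearEquiv (h : IsLinearlyCompact R M) (e : M ≃ₗ[R] M') :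
    IsLinearlyCompact R M' := by
  intro ι a N hfin
  obtain ⟨x, hx⟩ := h ι (e.symm ∘ a) (fun i => (N i).comap (e : M →ₗ[R] M')) fun s => by
    obtain ⟨x, hx⟩ := hfin s
    exact ⟨e.symm x, fun i hi => by simpa using hx i hi⟩
  exact ⟨e x, fun i => by simpa using hx i⟩

theorem exists_forall_sub_mem_of_le {L : Submodule R M} (hL : IsLinearlyCompact R L)
    {ι : Type u} (a : ι → M) (N : ι → Submodule R M) (hNL : ∀ i, N i ≤ L)
    (hfin : ∀ s : Finset ι, ∃ x, ∀ i ∈ s, x - a i ∈ N i) : ∃ x, ∀ i, x - a i ∈ N i := by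
  classical
  rcases isEmpty_or_nonempty ι with hι | ⟨⟨i₀⟩⟩
  · exact ⟨0, hι.elim⟩
  have ha : ∀ i, a i - a i₀ ∈ L := fun i => by
    obtain ⟨x, hx⟩ := hfin {i, i₀}
    have := L.sub_mem (hNL i₀ (hx i₀ (by simp))) (hNL i (hx i (by simp)))
    rwa [sub_sub_sub_cancel_left] at this
  obtain ⟨y, hy⟩ := hL ι (fun i => ⟨a i - a i₀, ha i⟩) (fun i => (N i).comap L.subtype)
    fun s => by
      obtain ⟨x, hx⟩ := hfin (insert i₀ s)
      refine ⟨⟨x - a i₀, hNL i₀ (hx i₀ (Finset.mem_insert_self _ _))⟩, fun i hi => ?_⟩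
      simpa using hx i (Finset.mem_insert_of_mem hi)
  exact ⟨y + a i₀, fun i => by simpa [sub_sub_eq_add_sub, add_sub_right_comm] using hy i⟩

theorem span_singleton [IsCancelMulZero R] [Module.IsTorsionFree R M] (h : IsLinearlyCompact R R)
    {x : M} (hx : x ≠ 0) :
    IsLinearlyCompact R (R ∙ x) :=
  h.of_linearEquiv <| (LinearEquiv.ofInjective _ (smul_left_injective R hx)).trans
    (LinearEquiv.ofEq _ _ (LinearMap.span_singleton_eq_range R M x).symm)

end IsLinearlyCompact

theorem Ideal.smul_eq_apply_of_dvd {R E : Type*} [CommRing R] [AddCommGroup E] [Module R E]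
    {I : Ideal R} (f : I →ₗ[R] E) {a b : I} (hab : (a : R) ∣ b) {e : E}
    (he : (a : R) • e = f a) : (b : R) • e = f b := by
  obtain ⟨t, ht⟩ := hab
  have hb : b = t • a := Subtype.ext (by simp [ht, mul_comm])
  rw [hb, map_smul, ← he, Submodule.coe_smul, smul_eq_mul, mul_smul]

section FractionField

variable {R K : Type*} [CommRing R] [Field K] [Algebra R K] [IsFractionRing R K]

theorem exists_smul_mkQ_eq (N : Submodule R K) {r : R} (hr : r ≠ 0) (y : K ⧸ N) :
    ∃ q : K, r • N.mkQ q = y := by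
  obtain ⟨y, rfl⟩ := N.mkQ_surjective y
  have hr' : algebraMap R K r ≠ 0 := (map_ne_zero_iff _ (IsFractionRing.injective R K)).mpr hr
  refine ⟨(algebraMap R K r)⁻¹ * y, ?_⟩
  rw [← map_smul, Algebra.smul_def, ← mul_assoc, mul_inv_cancel₀ hr', one_mul]

theorem mem_span_inv_of_smul_eq_algebraMap {r r₀ : R} (h : r ∣ r₀) (hr₀ : r₀ ≠ 0) {q : K}
    {y : R} (hy : r • q = algebraMap R K y) : q ∈ R ∙ (algebraMap R K r₀)⁻¹ := by
  obtain ⟨t, rfl⟩ := h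
  obtain ⟨hr, ht⟩ : algebraMap R K r ≠ 0 ∧ algebraMap R K t ≠ 0 := by
    rw [← mul_ne_zero_iff, ← map_mul]
    exact (map_ne_zero_iff _ (IsFractionRing.injective R K)).mpr hr₀
  refine Submodule.mem_span_singleton.mpr ⟨y * t, ?_⟩
  rw [Algebra.smul_def] at hy ⊢
  rw [map_mul, map_mul, ← hy]
  field_simp

theorem smul_mk_one_eq_zero_iff (J : Ideal R) (r : R) :
    r • (Submodule.Quotient.mk 1 : K ⧸ Submodule.map (Algebra.linearMap R K) J) = 0 ↔ r ∈ J := by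
  rw [← Submodule.Quotient.mk_smul, Submodule.Quotient.mk_eq_zero, Submodule.mem_map]
  simp [Algebra.smul_def, (IsFractionRing.injective R K).eq_iff]

theorem baer_quotient_map_of_isLinearlyCompact [IsDomain R] [ValuationRing R]
    (hR : IsLinearlyCompact R R) (J : Ideal R) :
    Module.Baer R (K ⧸ Submodule.map (Algebra.linearMap R K) J) := by
  set N := Submodule.map (Algebra.linearMap R K) J
  intro I f
  suffices ∃ e : K ⧸ N, ∀ r : I, (r : R) • e = f r by
    obtain ⟨e, he⟩ := this
    exact ⟨LinearMap.toSpanSingleton R _ e, fun x hx => he ⟨x, hx⟩⟩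
  by_cases hI : I = ⊥
  · subst hI
    exact ⟨0, fun r => by rw [Subsingleton.elim r 0, smul_zero, map_zero]⟩
  obtain ⟨r₀, hr₀I, hr₀⟩ := (Submodule.ne_bot_iff I).mp hI
  -- Only the divisors of `r₀` are needed, and their cosets lie in `R ∙ r₀⁻¹ ≅ R`.
  let ι := {r : I // (r : R) ∣ r₀}
  have hι : ∀ i : ι, (i.1 : R) ≠ 0 := fun i h => hr₀ (zero_dvd_iff.mp (h ▸ i.2))
  let S (i : ι) : Set K := {q | (i.1 : R) • N.mkQ q = f i.1}
  choose p hp using fun i : ι => exists_smul_mkQ_eq N (hι i) (f i.1)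
  have hS : ∀ i q, q ∈ S i ↔ q - p i ∈ N.comap ((i.1 : R) • LinearMap.id) := fun i q => by
    simp only [S, Set.mem_ofPred_eq, ← hp i, Submodule.mem_comap, LinearMap.smul_apply,
      LinearMap.id_apply, smul_sub, Submodule.mkQ_apply, ← Submodule.Quotient.mk_smul,
      Submodule.Quotient.eq]
  have hdir : Directed (· ⊇ ·) S := fun i j => by
    rcases ValuationRing.dvd_total (i.1 : R) j.1 with h | h
    · exact ⟨i, le_rfl, fun q hq => Ideal.smul_eq_apply_of_dvd f h hq⟩
    · exact ⟨j, fun q hq => Ideal.smul_eq_apply_of_dvd f h hq, le_rfl⟩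
  have hle : ∀ i : ι, N.comap ((i.1 : R) • LinearMap.id) ≤ R ∙ (algebraMap R K r₀)⁻¹ :=
    fun i q hq => by
      obtain ⟨y, -, hy⟩ := Submodule.mem_map.mp hq
      exact mem_span_inv_of_smul_eq_algebraMap i.2 hr₀ hy.symm
  have : Nonempty ι := ⟨⟨⟨r₀, hr₀I⟩, dvd_rfl⟩⟩
  obtain ⟨q, hq⟩ := (hR.span_singleton (inv_ne_zero ((map_ne_zero_iff _
    (IsFractionRing.injective R K)).mpr hr₀))).exists_forall_sub_mem_of_le p _ hle fun s => by
      obtain ⟨z, hz⟩ := hdir.finset_le s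
      exact ⟨p z, fun i hi => (hS i _).mp (hz i hi (hp z))⟩
  refine ⟨N.mkQ q, fun r => ?_⟩
  rcases ValuationRing.dvd_total (r : R) r₀ with h | h
  · exact (hS ⟨r, h⟩ q).mpr (hq ⟨r, h⟩)
  · exact Ideal.smul_eq_apply_of_dvd f h ((hS ⟨⟨r₀, hr₀I⟩, dvd_rfl⟩ q).mpr (hq _))

end FractionField

theorem Module.Injective.exists_linearMap_ne_zero {R E : Type u} [CommRing R] [IsLocalRing R]
    [AddCommGroup E] [Module R E] [Module.Injective R E] {e : E} (he : e ≠ 0)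
    (hann : ∀ r ∈ IsLocalRing.maximalIdeal R, r • e = 0)
    (M : Type*) [AddCommGroup M] [Module R M] [Nontrivial M] : ∃ f : M →ₗ[R] E, f ≠ 0 := by
  obtain ⟨x, hx⟩ := exists_ne (0 : M)
  let ψ := LinearMap.toSpanSingleton R M x
  have hker : LinearMap.ker ψ ≤ LinearMap.ker (LinearMap.toSpanSingleton R E e) := fun r hr =>
    hann r ((IsLocalRing.mem_maximalIdeal r).mpr fun hu => hx (hu.smul_eq_zero.mp hr))
  obtain ⟨h, hh⟩ := Module.Injective.extension_property R E _ _ ((LinearMap.ker ψ).liftQ ψ le_rfl)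
    (LinearMap.ker_eq_bot.mp (Submodule.ker_liftQ_eq_bot' _ _ rfl))
    ((LinearMap.ker ψ).liftQ _ hker)
  refine ⟨h, fun h0 => he ?_⟩
  have h1 := LinearMap.congr_fun hh (Submodule.Quotient.mk 1)
  rw [LinearMap.comp_apply, Submodule.liftQ_apply, Submodule.liftQ_apply, h0] at h1
  simpa using h1.symm

/-- Let `R` be a maximal valuation domain (a valuation domain which is linearly compact
in the discrete topology: every finitely solvable system of congruences is solvable)
with maximal ideal `m` and quotient field `Q`. Then `Q/m` is an injective cogenerator
of `Mod-R`. -/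
theorem quotientField_div_maximalIdeal_injective_cogenerator
    (R : Type) [CommRing R] [IsDomain R]
    (hchain : ∀ I J : Ideal R, I ≤ J ∨ J ≤ I)
    (hmax : ∀ (ι : Type) (a : ι → R) (I : ι → Ideal R),
      (∀ s : Finset ι, ∃ x : R, ∀ i ∈ s, x - a i ∈ I i) →
      ∃ x : R, ∀ i, x - a i ∈ I i)
    (m : Ideal R) (hm : m.IsMaximal) :
    Module.Injective R
      ((FractionRing R) ⧸ Submodule.map (Algebra.linearMap R (FractionRing R)) m) ∧
    (∀ (M : Type) [AddCommGroup M] [Module R M], Nontrivial M →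
      ∃ f : M →ₗ[R]
        ((FractionRing R) ⧸ Submodule.map (Algebra.linearMap R (FractionRing R)) m),
        f ≠ 0) := by
  have : ValuationRing R := ValuationRing.iff_ideal_total.mpr ⟨hchain⟩
  obtain rfl := IsLocalRing.eq_maximalIdeal hm
  have hinj := (baer_quotient_map_of_isLinearlyCompact (K := FractionRing R) hmax
    (IsLocalRing.maximalIdeal R)).injective
  have hann := smul_mk_one_eq_zero_iff (K := FractionRing R) (IsLocalRing.maximalIdeal R)
  refine ⟨hinj, fun M _ _ _ => hinj.exists_linearMap_ne_zero (fun h1 => ?_)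
    (fun r hr => (hann r).mpr hr) M⟩
  exact hm.ne_top ((Ideal.eq_top_iff_one _).mpr ((hann 1).mp (by rw [one_smul, h1])))
end

section
/- Let R be a valuation domain, q ⊆ Spec(R) a prime, and M an R-module such that the torsion-free part F_{q_α}(M) is an R_{q_α}-module for each prime q_α in a family (q_α)_{α<λ} with ⋂_{α<λ} q_α = q and the family decreasing. Then F_q(M) is an R_q-module. -/
/-!
If `s ∉ q = ⨅ i, q_i`, then `s ∉ q_i` for some `i`, so every `m : M` is congruent to `s • m'`
modulo `q_i`-torsion by the divisibility of `F_{q_i}(M)`. Since `q ≤ q_i`, every element outside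
`q_i` lies outside `q`, so `q_i`-torsion is `q`-torsion and the same congruence holds in `F_q(M)`.
-/

namespace LocalizedModule

variable {R M : Type*} [CommRing R] [AddCommGroup M] [Module R M] {S T : Submonoid R}

theorem mkLinearMap_eq_of_le (hST : S ≤ T) {m m' : M}
    (h : mkLinearMap S M m = mkLinearMap S M m') : mkLinearMap T M m = mkLinearMap T M m' := by
  obtain ⟨u, hu⟩ := mk_eq.mp h
  exact mk_eq.mpr ⟨⟨u, hST u.2⟩, hu⟩

theorem exists_smul_eq_in_range_mkLinearMap_of_le (hST : S ≤ T) (r : R)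
    (hdiv : ∀ y ∈ LinearMap.range (mkLinearMap S M),
      ∃ z ∈ LinearMap.range (mkLinearMap S M), r • z = y) :
    ∀ y ∈ LinearMap.range (mkLinearMap T M),
      ∃ z ∈ LinearMap.range (mkLinearMap T M), r • z = y := by
  rintro _ ⟨m, rfl⟩
  obtain ⟨_, ⟨m', rfl⟩, hm'⟩ := hdiv _ ⟨m, rfl⟩
  refine ⟨_, ⟨m', rfl⟩, ?_⟩
  rw [← map_smul] at hm' ⊢
  exact mkLinearMap_eq_of_le hST hm'

end LocalizedModule

theorem torsionFreeQuotient_localized_of_decreasing_family_general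
    (R : Type) [CommRing R]
    (q : Ideal R) (hq : q.IsPrime)
    (M : Type) [AddCommGroup M] [Module R M]
    (ι : Type)
    (qa : ι → Ideal R) (hprime : ∀ i, (qa i).IsPrime)
    (hinf : q = ⨅ i, qa i)
    (hdiv : ∀ i, ∀ s ∉ qa i,
      ∀ y ∈ LinearMap.range (LocalizedModule.mkLinearMap (qa i).primeCompl M),
        ∃ z ∈ LinearMap.range (LocalizedModule.mkLinearMap (qa i).primeCompl M),
          s • z = y) :
    ∀ s ∉ q,
      ∀ y ∈ LinearMap.range (LocalizedModule.mkLinearMap q.primeCompl M),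
        ∃ z ∈ LinearMap.range (LocalizedModule.mkLinearMap q.primeCompl M),
          s • z = y := by
  intro s hs
  obtain ⟨i, hi⟩ : ∃ i, s ∉ qa i := by
    simpa [hinf, Submodule.mem_iInf] using hs
  have hle : (qa i).primeCompl ≤ q.primeCompl := fun _ hu hxq =>
    hu ((hinf ▸ iInf_le qa i : q ≤ qa i) hxq)
  exact LocalizedModule.exists_smul_eq_in_range_mkLinearMap_of_le hle s (hdiv i s hi)

/-- Over a valuation domain: if `(q_α)` is a decreasing family of primes with
intersection `q`, and the torsion-free quotient `F_{q_α}(M)` is an `R_{q_α}`-module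
(i.e. `q_α`-divisible) for each `α`, then `F_q(M)` is an `R_q`-module
(i.e. `q`-divisible). -/
theorem torsionFreeQuotient_localized_of_decreasing_family
    (R : Type) [CommRing R] [IsDomain R]
    (hchain : ∀ I J : Ideal R, I ≤ J ∨ J ≤ I)
    (q : Ideal R) (hq : q.IsPrime)
    (M : Type) [AddCommGroup M] [Module R M]
    (ι : Type) [LinearOrder ι] [Nonempty ι]
    (qa : ι → Ideal R) (hprime : ∀ i, (qa i).IsPrime) (hdec : Antitone qa)
    (hinf : q = ⨅ i, qa i)
    (hdiv : ∀ i, ∀ s ∉ qa i,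
      ∀ y ∈ LinearMap.range (LocalizedModule.mkLinearMap (qa i).primeCompl M),
        ∃ z ∈ LinearMap.range (LocalizedModule.mkLinearMap (qa i).primeCompl M),
          s • z = y) :
    ∀ s ∉ q,
      ∀ y ∈ LinearMap.range (LocalizedModule.mkLinearMap q.primeCompl M),
        ∃ z ∈ LinearMap.range (LocalizedModule.mkLinearMap q.primeCompl M),
          s • z = y :=
  torsionFreeQuotient_localized_of_decreasing_family_general R q hq M ι qa hprime hinf hdiv
end

section
/- Let R be a commutative ring, q a prime ideal, and (M_i)_{i∈I} a family of R-modules such that Γ_q(M_i) = Soc_p(M_i) for all i, where p is a prime with q ⊊ p. Then Γ_q(∏_i M_i) = ∏_i Γ_q(M_i), and consequently F_q(∏_i M_i) ≅ ∏_i F_q(M_i). -/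
namespace Submodule

section TorsionPi

variable {R S ι : Type*} [CommSemiring R] [CommMonoid S] {M : ι → Type*}
  [∀ i, AddCommMonoid (M i)] [∀ i, Module R (M i)] [∀ i, DistribMulAction S (M i)]
  [∀ i, SMulCommClass S R (M i)]

theorem torsion'_pi_le :
    torsion' R (∀ i, M i) S ≤ pi Set.univ fun i => torsion' R (M i) S := by
  rintro m ⟨s, hs⟩ i -
  exact ⟨s, congrFun hs i⟩

/-- Without a common annihilator `s`, an element of `∏ Γ_S(M i)` may need infinitely many
different annihilators and fail to be torsion. -/
theorem torsion'_pi_eq_of_smul_eq_zero (s : S)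
    (hs : ∀ i, ∀ m ∈ torsion' R (M i) S, s • m = 0) :
    torsion' R (∀ i, M i) S = pi Set.univ fun i => torsion' R (M i) S :=
  le_antisymm torsion'_pi_le fun m hm =>
    ⟨s, funext fun i => hs i (m i) (hm i (Set.mem_univ i))⟩

end TorsionPi

section QuotientPi

variable {R ι : Type*} [Ring R] {M : ι → Type*} [∀ i, AddCommGroup (M i)]
  [∀ i, Module R (M i)]

theorem ker_piMap_mkQ (p : ∀ i, Submodule R (M i)) :
    LinearMap.ker (LinearMap.piMap fun i => (p i).mkQ) = pi Set.univ p := by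
  ext m
  simp [funext_iff]

/-- Unlike `Submodule.quotientPi`, this needs no finiteness of `ι`. -/
noncomputable def quotientPiEquiv (p : ∀ i, Submodule R (M i)) :
    ((∀ i, M i) ⧸ pi Set.univ p) ≃ₗ[R] ∀ i, M i ⧸ p i :=
  (quotEquivOfEq _ _ (ker_piMap_mkQ p).symm).trans
    (LinearMap.quotKerEquivOfSurjective _
      (Function.Surjective.piMap fun i => (p i).mkQ_surjective))

end QuotientPi

end Submodule

theorem torsion_of_pi_eq_pi_torsion_of_socle_general
    (R : Type) [CommRing R] (q p : Ideal R) (hq : q.IsPrime)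
    (hqp : q < p)
    (ι : Type) (M : ι → Type) [∀ i, AddCommGroup (M i)] [∀ i, Module R (M i)]
    (hsoc : ∀ i (m : M i),
      m ∈ Submodule.torsion' R (M i) ↥q.primeCompl ↔ ∀ r ∈ p, r • m = 0) :
    Submodule.torsion' R ((i : ι) → M i) ↥q.primeCompl =
      Submodule.pi Set.univ (fun i => Submodule.torsion' R (M i) ↥q.primeCompl) ∧
    Nonempty
      ((((i : ι) → M i) ⧸ Submodule.torsion' R ((i : ι) → M i) ↥q.primeCompl) ≃ₗ[R]
        ((i : ι) → (M i ⧸ Submodule.torsion' R (M i) ↥q.primeCompl))) := by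
  obtain ⟨s, hsp, hsq⟩ := Set.exists_of_ssubset hqp
  have htorsion := Submodule.torsion'_pi_eq_of_smul_eq_zero (R := R) (M := M)
    (⟨s, hsq⟩ : q.primeCompl) fun i m hm => (hsoc i m).mp hm s hsp
  exact ⟨htorsion,
    ⟨(Submodule.quotEquivOfEq _ _ htorsion).trans (Submodule.quotientPiEquiv _)⟩⟩

/-- Let `q ⊊ p` be primes of a commutative ring `R` and `(M_i)` a family of modules with
`Γ_q(M_i) = Soc_p(M_i)` for all `i`. Then `Γ_q(∏ M_i) = ∏ Γ_q(M_i)`, and consequently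
`F_q(∏ M_i) ≅ ∏ F_q(M_i)` (where `F_q(M) = M / Γ_q(M)`). -/
theorem torsion_of_pi_eq_pi_torsion_of_socle
    (R : Type) [CommRing R] (q p : Ideal R) (hq : q.IsPrime) (hp : p.IsPrime)
    (hqp : q < p)
    (ι : Type) (M : ι → Type) [∀ i, AddCommGroup (M i)] [∀ i, Module R (M i)]
    (hsoc : ∀ i (m : M i),
      m ∈ Submodule.torsion' R (M i) ↥q.primeCompl ↔ ∀ r ∈ p, r • m = 0) :
    Submodule.torsion' R ((i : ι) → M i) ↥q.primeCompl =
      Submodule.pi Set.univ (fun i => Submodule.torsion' R (M i) ↥q.primeCompl) ∧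
    Nonempty
      ((((i : ι) → M i) ⧸ Submodule.torsion' R ((i : ι) → M i) ↥q.primeCompl) ≃ₗ[R]
        ((i : ι) → (M i ⧸ Submodule.torsion' R (M i) ↥q.primeCompl))) :=
  torsion_of_pi_eq_pi_torsion_of_socle_general R q p hq hqp ι M hsoc
end

section
/- Let R be a valuation domain whose spectrum is countable. Then every admissible system of intervals on Spec(R), i.e., every set X of formal intervals [p,q] (p ⊆ q primes, p idempotent) which is disjoint and complete, is nowhere dense as a totally ordered set: (X, <) contains no dense interval, where [p,q] < [p',q'] means q ⊊ p'. More generally: any countable totally ordered set in which every non-empty subset has a supremum and an infimum contains no non-degenerate dense interval. -/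
/-!
If `[x, y]` were a dense interval of a countable linear order, then `(x, y)` would be a countable
dense linear order without endpoints, hence isomorphic to `ℚ` by Cantor's theorem. But suprema of
bounded subsets of `(x, y)` exist in the ambient order and stay inside `(x, y)`, while `ℚ` has a
bounded set without supremum, such as the rationals below `√2`.

An admissible system is ordered like the set of its left endpoints, since the left endpoint
determines the interval by disjointness; completeness makes that chain of ideals closed under
suprema, and a countable spectrum makes it countable.
-/

open Set

theorem Rat.not_isLUB_setOf_cast_lt {ξ : ℝ} (hξ : Irrational ξ) (q : ℚ) :
    ¬IsLUB {r : ℚ | (r : ℝ) < ξ} q := by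
  intro hq
  rcases lt_or_gt_of_ne (hξ.ne_rat q).symm with hqξ | hξq
  · obtain ⟨r, hqr, hrξ⟩ := exists_rat_btwn hqξ
    exact (hq.1 hrξ).not_gt (mod_cast hqr)
  · obtain ⟨r, hξr, hrq⟩ := exists_rat_btwn hξq
    have hr : r ∈ upperBounds {r : ℚ | (r : ℝ) < ξ} := fun s hs ↦ by
      exact_mod_cast (hs.trans hξr).le
    exact (hq.2 hr).not_gt (mod_cast hrq)

theorem Rat.exists_bddAbove_forall_not_isLUB :
    ∃ S : Set ℚ, S.Nonempty ∧ BddAbove S ∧ ∀ q, ¬IsLUB S q := by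
  obtain ⟨a, ha⟩ := exists_rat_lt √2
  obtain ⟨b, hb⟩ := exists_rat_gt √2
  refine ⟨{r : ℚ | (r : ℝ) < √2}, ⟨a, ha⟩, ⟨b, fun r hr ↦ ?_⟩,
    Rat.not_isLUB_setOf_cast_lt irrational_sqrt_two⟩
  exact_mod_cast (hr.trans hb).le

theorem exists_bddAbove_forall_not_isLUB_of_countable_dense (β : Type*) [LinearOrder β]
    [Countable β] [DenselyOrdered β] [NoMinOrder β] [NoMaxOrder β] [Nonempty β] :
    ∃ S : Set β, S.Nonempty ∧ BddAbove S ∧ ∀ a, ¬IsLUB S a := by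
  obtain ⟨e⟩ : Nonempty (β ≃o ℚ) := Order.iso_of_countable_dense β ℚ
  obtain ⟨S, hne, hbdd, hno⟩ := Rat.exists_bddAbove_forall_not_isLUB
  exact ⟨e ⁻¹' S, hne.preimage e.surjective, e.bddAbove_preimage.2 hbdd,
    fun a ha ↦ hno (e a) (e.isLUB_preimage.1 ha)⟩

theorem isLUB_of_isLUB_image_val {α : Type*} [LE α] {s : Set α} {S : Set s} {a : s}
    (h : IsLUB (Subtype.val '' S) a) : IsLUB S a :=
  ⟨fun _ hb ↦ h.1 (mem_image_of_mem _ hb),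
    fun _ hb ↦ h.2 (by rintro _ ⟨c, hc, rfl⟩; exact hb hc)⟩

section LinearOrder

variable {α : Type*} [LinearOrder α]

theorem Set.OrdConnected.exists_isLUB {s : Set α} (hs : s.OrdConnected)
    (hsup : ∀ S : Set α, S.Nonempty → BddAbove S → ∃ a, IsLUB S a)
    (S : Set s) (hne : S.Nonempty) (hbdd : BddAbove S) : ∃ a, IsLUB S a := by
  obtain ⟨⟨b, hb⟩, hbS⟩ := hbdd
  obtain ⟨⟨c, hc⟩, hcS⟩ := hne
  obtain ⟨a, ha⟩ := hsup (Subtype.val '' S) ⟨c, mem_image_of_mem _ hcS⟩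
    ⟨b, by rintro _ ⟨d, hd, rfl⟩; exact hbS hd⟩
  have hcb : a ≤ b := ha.2 (by rintro _ ⟨d, hd, rfl⟩; exact hbS hd)
  have hac : c ≤ a := ha.1 ⟨⟨c, hc⟩, hcS, rfl⟩
  exact ⟨⟨a, hs.out hc hb ⟨hac, hcb⟩⟩, isLUB_of_isLUB_image_val ha⟩

theorem exists_covBy_of_countable [Countable α]
    (hsup : ∀ S : Set α, S.Nonempty → BddAbove S → ∃ a, IsLUB S a) {x y : α} (hxy : x < y) :
    ∃ s t, x ≤ s ∧ t ≤ y ∧ s ⋖ t := by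
  by_contra! hdense
  have between {s t : α} (hs : x ≤ s) (hst : s < t) (ht : t ≤ y) : ∃ z, s < z ∧ z < t :=
    (not_covBy_iff hst).1 (hdense s t hs ht)
  have : Nonempty (Ioo x y) := by
    obtain ⟨z, hz⟩ := between le_rfl hxy le_rfl
    exact ⟨⟨z, hz⟩⟩
  have : DenselyOrdered (Ioo x y) := ⟨fun a b hab ↦ by
    obtain ⟨z, haz, hzb⟩ := between a.2.1.le hab b.2.2.le
    exact ⟨⟨z, a.2.1.trans haz, hzb.trans b.2.2⟩, haz, hzb⟩⟩
  have : NoMinOrder (Ioo x y) := ⟨fun a ↦ by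
    obtain ⟨z, hxz, hza⟩ := between le_rfl a.2.1 a.2.2.le
    exact ⟨⟨z, hxz, hza.trans a.2.2⟩, hza⟩⟩
  have : NoMaxOrder (Ioo x y) := ⟨fun a ↦ by
    obtain ⟨z, haz, hzy⟩ := between a.2.1.le a.2.2 le_rfl
    exact ⟨⟨z, a.2.1.trans haz, hzy⟩, haz⟩⟩
  obtain ⟨S, hne, hbdd, hno⟩ := exists_bddAbove_forall_not_isLUB_of_countable_dense (Ioo x y)
  obtain ⟨a, ha⟩ := ordConnected_Ioo.exists_isLUB hsup S hne hbdd
  exact hno a ha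

end LinearOrder

section IntervalSystem

variable {α : Type*} [CompleteLattice α] {X : Set (α × α)}

theorem exists_isLUB_of_fst_image
    (hsup : ∀ Y ⊆ X, Y.Nonempty → ∃ μ ∈ X, μ.1 = sSup (Prod.fst '' Y))
    (S : Set (Prod.fst '' X)) (hne : S.Nonempty) : ∃ a, IsLUB S a := by
  set Y := {c ∈ X | c.1 ∈ Subtype.val '' S}
  have hY : Prod.fst '' Y = Subtype.val '' S := by
    ext a
    constructor
    · rintro ⟨c, ⟨-, hc⟩, rfl⟩
      exact hc
    · rintro ⟨⟨_, c, hc, rfl⟩, hcS, rfl⟩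
      exact ⟨c, ⟨hc, _, hcS, rfl⟩, rfl⟩
  obtain ⟨⟨_, c, hc, rfl⟩, hcS⟩ := hne
  obtain ⟨μ, hμ, hμY⟩ := hsup Y (sep_subset _ _) ⟨c, hc, _, hcS, rfl⟩
  refine ⟨⟨μ.1, mem_image_of_mem _ hμ⟩, isLUB_of_isLUB_image_val ?_⟩
  simpa only [hμY, hY] using isLUB_sSup (Subtype.val '' S)

theorem exists_adjacent_of_countable_fst_image (hchain : IsChain (· ≤ ·) (Prod.fst '' X))
    (hcount : (Prod.fst '' X).Countable) (hle : ∀ c ∈ X, c.1 ≤ c.2)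
    (hdisj : ∀ c ∈ X, ∀ d ∈ X, c ≠ d → c.1 ≤ d.1 → c.2 < d.1)
    (hsup : ∀ Y ⊆ X, Y.Nonempty → ∃ μ ∈ X, μ.1 = sSup (Prod.fst '' Y))
    {c d : α × α} (hc : c ∈ X) (hd : d ∈ X) (hcd : c.2 < d.1) :
    ∃ s ∈ X, ∃ t ∈ X, (c = s ∨ c.2 < s.1) ∧ s.2 < t.1 ∧ (t = d ∨ t.2 < d.1) ∧
      ¬∃ z ∈ X, s.2 < z.1 ∧ z.2 < t.1 := by
  classical
  let : LinearOrder (Prod.fst '' X) := hchain.linearOrder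
  have : Countable (Prod.fst '' X) := hcount.to_subtype
  have eq_or_snd_lt {c d : α × α} (hc : c ∈ X) (hd : d ∈ X) (h : c.1 ≤ d.1) : c = d ∨ c.2 < d.1 :=
    (eq_or_ne c d).imp_right fun hne ↦ hdisj c hc d hd hne h
  obtain ⟨⟨_, s, hs, rfl⟩, ⟨_, t, ht, rfl⟩, hcs, htd, hst⟩ :=
    exists_covBy_of_countable (fun S hne _ ↦ exists_isLUB_of_fst_image hsup S hne)
      (x := ⟨c.1, c, hc, rfl⟩) (y := ⟨d.1, d, hd, rfl⟩) ((hle c hc).trans_lt hcd)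
  refine ⟨s, hs, t, ht, eq_or_snd_lt hc hs hcs, ?_, eq_or_snd_lt ht hd htd, ?_⟩
  · exact (eq_or_snd_lt hs ht hst.le).resolve_left (by rintro rfl; exact hst.ne rfl)
  · rintro ⟨z, hz, hsz, hzt⟩
    exact hst.2 (c := ⟨z.1, z, hz, rfl⟩) ((hle s hs).trans_lt hsz) ((hle z hz).trans_lt hzt)

end IntervalSystem

/-- Over a valuation domain with countable spectrum, every admissible system of intervals
(a disjoint and complete set of formal intervals `[p,q]` of primes with `p` idempotent)
is nowhere dense as a totally ordered set, where `[p,q] < [p',q']` iff `q ⊊ p'`.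
More generally, any countable totally ordered set in which every non-empty subset has a
supremum and an infimum contains no non-degenerate dense interval. -/
theorem admissible_system_nowhere_dense_of_countable_spectrum :
    (∀ (R : Type) [CommRing R] [IsDomain R],
      (∀ I J : Ideal R, I ≤ J ∨ J ≤ I) →
      Countable (PrimeSpectrum R) →
      ∀ X : Set (Ideal R × Ideal R),
        (∀ c ∈ X, c.1.IsPrime ∧ c.2.IsPrime ∧ c.1 ≤ c.2 ∧ c.1 * c.1 = c.1) →
        (∀ c ∈ X, ∀ d ∈ X, c ≠ d → c.1 ≤ d.1 → c.2 < d.1) →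
        (∀ Y ⊆ X, Y.Nonempty →
          (∃ μ ∈ X, μ.1 = sSup (Prod.fst '' Y)) ∧
          (∃ ν ∈ X, ν.2 = sInf (Prod.snd '' Y))) →
        ∀ c ∈ X, ∀ d ∈ X, c.2 < d.1 →
          ∃ s ∈ X, ∃ t ∈ X, (c = s ∨ c.2 < s.1) ∧ s.2 < t.1 ∧ (t = d ∨ t.2 < d.1) ∧
            ¬∃ z ∈ X, s.2 < z.1 ∧ z.2 < t.1) ∧
    (∀ (X : Type) [LinearOrder X] [Countable X],
      (∀ S : Set X, S.Nonempty → ∃ a, IsLUB S a) →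
      (∀ S : Set X, S.Nonempty → ∃ a, IsGLB S a) →
      ∀ x y : X, x < y →
        ∃ s t : X, x ≤ s ∧ s < t ∧ t ≤ y ∧ ¬∃ z, s < z ∧ z < t) := by
  refine ⟨fun R _ _ hval _ X hX hdisj hcomp c hc d hd hcd ↦ ?_,
    fun X _ _ hsup _ x y hxy ↦ ?_⟩
  · have hcount : (Prod.fst '' X).Countable := (countable_range PrimeSpectrum.asIdeal).mono <| by
      rintro _ ⟨c, hc, rfl⟩
      exact ⟨⟨c.1, (hX c hc).1⟩, rfl⟩
    exact exists_adjacent_of_countable_fst_image (fun I _ J _ _ ↦ hval I J) hcount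
      (fun c hc ↦ (hX c hc).2.2.1) hdisj (fun Y hY hne ↦ (hcomp Y hY hne).1) hc hd hcd
  · obtain ⟨s, t, hxs, hty, hst⟩ := exists_covBy_of_countable (fun S hne _ ↦ hsup S hne) hxy
    exact ⟨s, t, hxs, hst.lt, hty, fun ⟨z, hsz, hzt⟩ ↦ hst.2 hsz hzt⟩
end
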